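/- arXiv:1810.00533 — 4 statements merged into one kernel-verified Lean document; each statement's English description precedes it below -/
import Mathlib

section
/- Let α and β be compositions with α ≠ 1^{ℓ(α)} and λ(α) = λ(β), and suppose r_α ≥_s r_β. Then δ_α ≥ δ_β, and if δ_α = δ_β, then q'(α) ≤_lex q'(β). -/
namespace RibbonNearEq

/-- A composition is a finite sequence of positive integers. -/
def IsComposition (α : List ℕ) : Prop := ∀ x ∈ α, 0 < x

/-- A partition is a weakly decreasing finite sequence of positive integers. -/
def IsPartitionList (ν : List ℕ) : Prop :=
  ν.Pairwise (· ≥ ·) ∧ ∀ x ∈ ν, 0 < x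

/-- The content of a tableau (given as its list of rows), as a monomial exponent
function: `contents T v` is the number of entries of `T` equal to `v`. -/
def contents (T : List (List ℕ)) : ℕ → ℕ := fun v => T.flatten.count v

/-- The rows of `T` have the lengths prescribed by the shape `sh`. -/
def RowsMatch (sh : List ℕ) (T : List (List ℕ)) : Prop :=
  T.length = sh.length ∧ ∀ i < T.length, (T.getD i []).length = sh.getD i 0

/-- Every row consists of positive integers and is weakly increasing. -/
def RowsSemistandard (T : List (List ℕ)) : Prop :=
  ∀ row ∈ T, row.Pairwise (· ≤ ·) ∧ ∀ x ∈ row, 0 < x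

/-- A semistandard Young tableau of (left-justified) partition shape `ν`:
rows weakly increase left to right, columns strictly increase top to bottom. -/
def IsSSYT (ν : List ℕ) (T : List (List ℕ)) : Prop :=
  RowsMatch ν T ∧ RowsSemistandard T ∧
  ∀ i, i + 1 < T.length → ∀ j < (T.getD (i + 1) []).length,
    (T.getD i []).getD j 0 < (T.getD (i + 1) []).getD j 0

/-- A semistandard Young tableau of ribbon shape `α` (rows listed from top to
bottom, the rightmost cell of row `i+1` directly below the leftmost cell of row
`i`): rows weakly increase, and the leftmost entry of row `i` is strictly less
than the rightmost entry of row `i+1` (the two-cell columns strictly increase). -/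
def IsRibbonSSYT (α : List ℕ) (T : List (List ℕ)) : Prop :=
  RowsMatch α T ∧ RowsSemistandard T ∧
  ∀ i, i + 1 < T.length →
    (T.getD i []).headI < (T.getD (i + 1) []).getLastD 0

/-- The Schur function `s_ν`, encoded by its monomial coefficient function: the
coefficient of `x_1^{m 1} x_2^{m 2} ⋯` is the number of SSYT of shape `ν` and
content `m`. -/
noncomputable def schur (ν : List ℕ) : (ℕ → ℕ) → ℤ :=
  fun m => (Set.ncard {T : List (List ℕ) | IsSSYT ν T ∧ contents T = m} : ℤ)

/-- The ribbon Schur function `r_α`, encoded by its monomial coefficient function. -/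
noncomputable def ribbon (α : List ℕ) : (ℕ → ℕ) → ℤ :=
  fun m => (Set.ncard {T : List (List ℕ) | IsRibbonSSYT α T ∧ contents T = m} : ℤ)

/-- `δ_α`: the number of end parts of `α` equal to `1`. -/
def deltaEnds (α : List ℕ) : ℕ :=
  (if α.headI = 1 then 1 else 0) + (if α.getLastD 0 = 1 then 1 else 0)

/-- The lengths `p_1, …, p_{R-k+1}` of the (possibly empty) runs of `1`'s in `α`
before, between, and after the parts of `α` that are at least `2`. -/
def oneRuns : List ℕ → List ℕ
  | [] => [0]
  | x :: rest =>
    if x = 1 then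
      match oneRuns rest with
      | [] => [1]
      | r :: rs => (r + 1) :: rs
    else 0 :: oneRuns rest

/-- `p'(α) = (p_1 - 1) p_2 ⋯ p_{R-k} (p_{R-k+1} - 1)`. -/
def p'List (α : List ℕ) : List ℤ :=
  let l : List ℤ := (oneRuns α).map fun n => (n : ℤ)
  (l.headI - 1) :: (l.tail.dropLast ++ [l.getLastD 0 - 1])

/-- `q'(α)`: `q'_j` is the number of entries of `p'(α)` equal to `j`. -/
def q'Seq (α : List ℕ) : ℕ → ℕ := fun j => (p'List α).count ((j : ℤ))

/-- A symmetric function is Schur-positive when it is a nonnegative linear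
combination of Schur functions indexed by partitions. -/
def SchurPos (F : (ℕ → ℕ) → ℤ) : Prop :=
  ∃ (S : Finset (List ℕ)) (c : List ℕ → ℕ),
    (∀ ν ∈ S, IsPartitionList ν) ∧
    F = fun m => ∑ ν ∈ S, (c ν : ℤ) * schur ν m

/-- Lexicographic order on sequences: `f ≤_lex g`. -/
def LexLE (f g : ℕ → ℕ) : Prop :=
  f = g ∨ ∃ j, (∀ j' < j, f j' = g j') ∧ f j < g j

/-!
In a ribbon tableau the last entry of each row is bounded below by a value determined by the
shape alone (`minLasts`), and the filling with these row ends and `1` everywhere else is itself a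
ribbon tableau. If `r_α - r_β` is Schur positive, the content of this minimal `β`-tableau is the
content of some `α`-tableau, which thus has as many entries `> t` as the minimal `β`-tableau; so
for every `t ≥ 1` at most as many forced row ends of `α` as of `β` exceed `t`. Counted run by run,
these numbers are `Σ_{x ∈ p'} max(x + 2 - t, 0)`. Since `p'(α)` and `p'(β)` have equal length and
sum, the inequalities pass to `Σ_{x ∈ p'} max(s - x, 0)`, which at `s = d + 1` only sees the
entries `≤ d` and counts those equal to `d` once. This compares first the numbers of entries `-1`,
which are `2 - δ`, and then, when these agree, `q'` lexicographically.
-/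

open List

lemma getLastD_mem_of_ne_nil {α : Type*} {l : List α} (h : l ≠ []) (d : α) :
    l.getLastD d ∈ l := by
  rw [getLastD_eq_getLast?, getLast?_eq_some_getLast h]
  exact getLast_mem h

lemma getLastD_append_cons {α : Type*} (l : List α) (a : α) (γ : List α) (d : α) :
    (l ++ a :: γ).getLastD d = γ.getLastD a := by
  induction l generalizing d with
  | nil => exact getLastD_cons
  | cons b l ih => rw [cons_append, getLastD_cons, ih]

lemma eq_of_flatten_eq_of_map_length_eq {α : Type*} :
    ∀ {T T' : List (List α)}, T.map length = T'.map length → T.flatten = T'.flatten → T = T'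
  | [], [], _, _ => rfl
  | r :: T, r' :: T', hlen, hflat => by
    simp only [map_cons, cons.injEq, flatten_cons] at hlen hflat
    obtain ⟨rfl, hrest⟩ := append_inj hflat hlen.1
    rw [eq_of_flatten_eq_of_map_length_eq hlen.2 hrest]

lemma replicate_append_induction {P : List ℕ → Prop} (ones : ∀ p, P (replicate p 1))
    (step : ∀ p z γ, z ≠ 1 → P γ → P (replicate p 1 ++ z :: γ)) (γ : List ℕ) : P γ := by
  suffices h : ∀ p, P (replicate p 1 ++ γ) by simpa using h 0
  induction γ with
  | nil => simpa using ones
  | cons x γ ih =>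
    intro p
    by_cases hx : x = 1
    · simpa [hx, replicate_succ'] using ih (p + 1)
    · exact step p x γ hx (by simpa using ih 0)

lemma exists_eq_replicate_append_cons {γ : List ℕ} (h : ∃ z ∈ γ, z ≠ 1) :
    ∃ p z rest, z ≠ 1 ∧ γ = replicate p 1 ++ z :: rest := by
  induction γ using replicate_append_induction with
  | ones p =>
    obtain ⟨z, hz, hz1⟩ := h
    exact absurd (eq_of_mem_replicate hz) hz1
  | step p z γ hz _ => exact ⟨p, z, γ, hz, rfl⟩

lemma countP_range'_lt (c p t : ℕ) : (range' c p).countP (t < ·) = c + p - max c (t + 1) := by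
  induction p generalizing c with
  | zero => simp
  | succ p ih =>
    rw [range'_succ, countP_cons, ih]
    simp only [decide_eq_true_eq]
    split_ifs <;> omega

def excess (l : List ℤ) (s : ℤ) : ℕ := (l.map fun x => (x - s).toNat).sum

def deficit (l : List ℤ) (s : ℤ) : ℕ := (l.map fun x => (s - x).toNat).sum

lemma excess_sub_deficit (l : List ℤ) (s : ℤ) :
    (excess l s : ℤ) - deficit l s = l.sum - s * l.length := by
  induction l with
  | nil => simp [excess, deficit]
  | cons a l ih =>
    simp only [excess, deficit, map_cons, sum_cons, length_cons] at ih ⊢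
    have ha := Int.toNat_sub_toNat_neg (a - s)
    rw [neg_sub] at ha
    simp only [Nat.cast_add, Nat.cast_one]
    linear_combination ih + ha

lemma deficit_le_of_excess_le {l₁ l₂ : List ℤ} (hlen : l₁.length = l₂.length)
    (hsum : l₁.sum = l₂.sum) {s : ℤ} (h : excess l₁ s ≤ excess l₂ s) :
    deficit l₁ s ≤ deficit l₂ s := by
  have h₁ := excess_sub_deficit l₁ s
  have h₂ := excess_sub_deficit l₂ s
  rw [hlen, hsum] at h₁
  omega

lemma deficit_add_one (l : List ℤ) (d : ℤ) :
    deficit l (d + 1) = deficit (l.filter (· < d)) (d + 1) + l.count d := by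
  induction l with
  | nil => simp [deficit]
  | cons a l ih =>
    simp only [deficit] at ih
    rcases lt_trichotomy a d with h | rfl | h
    · simp only [deficit, map_cons, sum_cons, ih, h, decide_true, filter_cons_of_pos, ne_eq,
        h.ne, not_false_eq_true, count_cons_of_ne]
      omega
    · simp only [deficit, map_cons, add_sub_cancel_left, Int.toNat_one, sum_cons, ih,
        lt_self_iff_false, decide_false, Bool.false_eq_true, not_false_eq_true,
        filter_cons_of_neg, count_cons_self]
      omega
    · simp only [deficit, map_cons, sum_cons, ih, h.not_gt, decide_false, Bool.false_eq_true,
        not_false_eq_true, filter_cons_of_neg, ne_eq, h.ne', count_cons_of_ne]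
      omega

lemma count_le_of_deficit_le {l₁ l₂ : List ℤ} {d : ℤ}
    (hcount : ∀ v < d, l₁.count v = l₂.count v)
    (h : deficit l₁ (d + 1) ≤ deficit l₂ (d + 1)) : l₁.count d ≤ l₂.count d := by
  have hperm : l₁.filter (· < d) ~ l₂.filter (· < d) := by
    refine perm_iff_count.2 fun v => ?_
    by_cases hv : v < d
    · rw [count_filter (by simpa), count_filter (by simpa)]
      exact hcount v hv
    · rw [count_eq_zero_of_not_mem, count_eq_zero_of_not_mem] <;> simp [hv]
  have hfilter : deficit (l₁.filter (· < d)) (d + 1) = deficit (l₂.filter (· < d)) (d + 1) :=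
    (hperm.map _).sum_eq
  rw [deficit_add_one l₁, deficit_add_one l₂, hfilter] at h
  omega

lemma lexLE_of_forall_eq_imp_le {f g : ℕ → ℕ} (h : ∀ d, (∀ j < d, f j = g j) → f d ≤ g d) :
    LexLE f g := by
  classical
  by_cases hfg : f = g
  · exact Or.inl hfg
  have hex : ∃ d, f d ≠ g d := by
    by_contra! h'
    exact hfg (funext h')
  have hmin : ∀ j < Nat.find hex, f j = g j := fun j hj => not_not.1 (Nat.find_min hex hj)
  exact Or.inr ⟨Nat.find hex, hmin, lt_of_le_of_ne (h _ hmin) (Nat.find_spec hex)⟩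

theorem count_neg_one_le_and_lexLE {l₁ l₂ : List ℤ} (h₁ : ∀ x ∈ l₁, -1 ≤ x)
    (h₂ : ∀ x ∈ l₂, -1 ≤ x) (h : ∀ s : ℕ, deficit l₁ s ≤ deficit l₂ s) :
    l₁.count (-1) ≤ l₂.count (-1) ∧
      (l₁.count (-1) = l₂.count (-1) →
        LexLE (fun j : ℕ => l₁.count (j : ℤ)) (fun j => l₂.count (j : ℤ))) := by
  have hbelow : ∀ v < -1, l₁.count v = l₂.count v := fun v hv => by
    rw [count_eq_zero_of_not_mem fun hm => by linarith [h₁ v hm],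
      count_eq_zero_of_not_mem fun hm => by linarith [h₂ v hm]]
  refine ⟨count_le_of_deficit_le hbelow (by simpa using h 0), fun hneg => ?_⟩
  refine lexLE_of_forall_eq_imp_le fun d hd =>
    count_le_of_deficit_le ?_ (by exact_mod_cast h (d + 1))
  intro v hv
  rcases lt_trichotomy v (-1) with hv' | rfl | hv'
  · exact hbelow v hv'
  · exact hneg
  · lift v to ℕ using by omega
    exact hd v (by omega)

lemma rowsMatch_iff_map_length {sh : List ℕ} {T : List (List ℕ)} :
    RowsMatch sh T ↔ T.map length = sh := by
  constructor
  · rintro ⟨hlen, hrow⟩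
    refine ext_getElem (by simp [hlen]) fun i hi hi' => ?_
    have hiT : i < T.length := by simpa using hi
    have := hrow i hiT
    rw [getD_eq_getElem _ _ hiT, getD_eq_getElem _ _ hi'] at this
    simpa using this
  · rintro rfl
    exact ⟨by simp, fun i hi => by simp [getElem?_eq_getElem hi]⟩

lemma isRibbonSSYT_nil : IsRibbonSSYT [] [] :=
  ⟨rowsMatch_iff_map_length.2 rfl, by simp [RowsSemistandard], by simp⟩

lemma isRibbonSSYT_cons {g : ℕ} {γ r : List ℕ} {T : List (List ℕ)} :
    IsRibbonSSYT (g :: γ) (r :: T) ↔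
      r.length = g ∧ (r.Pairwise (· ≤ ·) ∧ ∀ x ∈ r, 0 < x) ∧ IsRibbonSSYT γ T ∧
        ∀ r' ∈ T.head?, r.headI < r'.getLastD 0 := by
  simp only [IsRibbonSSYT, RowsSemistandard, rowsMatch_iff_map_length, map_cons, cons.injEq,
    forall_mem_cons, length_cons]
  constructor
  · rintro ⟨⟨hr, hm⟩, ⟨hrow, hrows⟩, hcol⟩
    refine ⟨hr, hrow, ⟨hm, hrows, fun i hi => by simpa using hcol (i + 1) (by omega)⟩, ?_⟩
    rintro r' hr'
    obtain ⟨T', rfl⟩ : ∃ T', T = r' :: T' := by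
      cases T with
      | nil => simp at hr'
      | cons a T' => exact ⟨T', by simpa using hr'⟩
    simpa using hcol 0 (by simp)
  · rintro ⟨hr, hrow, ⟨hm, hrows, hcol⟩, hlink⟩
    refine ⟨⟨hr, hm⟩, ⟨hrow, hrows⟩, fun i hi => ?_⟩
    cases i with
    | zero =>
      cases T with
      | nil => simp at hi
      | cons r' T' => simpa using hlink r' rfl
    | succ i => simpa using hcol i (by omega)

lemma setOf_isRibbonSSYT_contents_finite (γ : List ℕ) (m : ℕ → ℕ) :
    {T | IsRibbonSSYT γ T ∧ contents T = m}.Finite := by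
  rcases Set.eq_empty_or_nonempty {T | IsRibbonSSYT γ T ∧ contents T = m} with h | ⟨T₀, -, hT₀⟩
  · exact h ▸ Set.finite_empty
  refine Set.Finite.of_finite_image (f := flatten)
    ((finite_toSet T₀.flatten.permutations).subset ?_) ?_
  · rintro _ ⟨T, ⟨-, hT⟩, rfl⟩
    exact mem_permutations.2 (perm_iff_count.2 fun v => congrFun (hT.trans hT₀.symm) v)
  · rintro T ⟨hT, -⟩ T' ⟨hT', -⟩ h
    exact eq_of_flatten_eq_of_map_length_eq
      ((rowsMatch_iff_map_length.1 hT.1).trans (rowsMatch_iff_map_length.1 hT'.1).symm) h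

lemma SchurPos.apply_nonneg {F : (ℕ → ℕ) → ℤ} (h : SchurPos F) (m : ℕ → ℕ) : 0 ≤ F m := by
  obtain ⟨S, c, -, rfl⟩ := h
  exact Finset.sum_nonneg fun ν _ => mul_nonneg (Int.natCast_nonneg _) (Int.natCast_nonneg _)

lemma exists_ribbonSSYT_of_schurPos_sub {α β : List ℕ} (h : SchurPos (ribbon α - ribbon β))
    {T : List (List ℕ)} (hT : IsRibbonSSYT β T) :
    ∃ T', IsRibbonSSYT α T' ∧ contents T' = contents T := by
  have hβ : 0 < ribbon β (contents T) := by
    unfold ribbon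
    exact_mod_cast (Set.ncard_pos (setOf_isRibbonSSYT_contents_finite β _)).2 ⟨T, hT, rfl⟩
  have hαβ := h.apply_nonneg (contents T)
  rw [Pi.sub_apply, sub_nonneg] at hαβ
  unfold ribbon at hβ hαβ
  exact Set.nonempty_of_ncard_ne_zero
    (s := {T' | IsRibbonSSYT α T' ∧ contents T' = contents T}) (by omega)

/-- The least possible last entries of the rows of a ribbon tableau of shape `γ` whose first
row ends in an entry `≥ c` (a row of length `≥ 2` may start with `1`, so below it the bound
drops back to `2`). -/
def minLasts : List ℕ → ℕ → List ℕ
  | [], _ => []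
  | g :: γ, c => c :: minLasts γ (if g = 1 then c + 1 else 2)

def minFilling (γ : List ℕ) (c : ℕ) : List (List ℕ) :=
  zipWith (fun g x => replicate (g - 1) 1 ++ [x]) γ (minLasts γ c)

lemma minFilling_cons (g : ℕ) (γ : List ℕ) (c : ℕ) :
    minFilling (g :: γ) c =
      (replicate (g - 1) 1 ++ [c]) :: minFilling γ (if g = 1 then c + 1 else 2) := by
  simp [minFilling, minLasts]

lemma isRibbonSSYT_minFilling :
    ∀ {γ : List ℕ} {c : ℕ}, IsComposition γ → 0 < c → IsRibbonSSYT γ (minFilling γ c)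
  | [], _, _, _ => isRibbonSSYT_nil
  | g :: γ, c, hγ, hc => by
    have hg : 0 < g := hγ g mem_cons_self
    have hnext : 0 < if g = 1 then c + 1 else 2 := by split_ifs <;> omega
    rw [minFilling_cons, isRibbonSSYT_cons]
    have hlen : (replicate (g - 1) 1 ++ [c]).length = g := by
      simp only [length_append, length_replicate, length_cons, length_nil]
      omega
    refine ⟨hlen, ⟨?_, ?_⟩,
      isRibbonSSYT_minFilling (fun x hx => hγ x (mem_cons_of_mem _ hx)) hnext, ?_⟩
    · refine pairwise_append.2 ⟨pairwise_replicate.2 (Or.inr le_rfl), by simp, ?_⟩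
      intro x hx y hy
      rw [eq_of_mem_replicate hx, mem_singleton.1 hy]
      exact hc
    · intro x hx
      rcases mem_append.1 hx with h | h
      · rw [eq_of_mem_replicate h]; exact one_pos
      · rw [mem_singleton.1 h]; exact hc
    · intro r' hr'
      cases γ with
      | nil => simp [minFilling] at hr'
      | cons g' γ' =>
        rw [minFilling_cons] at hr'
        obtain rfl := Option.mem_some_iff.1 hr'
        obtain ⟨k, rfl⟩ := Nat.exists_eq_add_of_lt hg
        rcases k with _ | k <;> simp [replicate_succ]

lemma countP_flatten_minFilling {t : ℕ} (ht : 0 < t) :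
    ∀ (γ : List ℕ) (c : ℕ),
      (minFilling γ c).flatten.countP (t < ·) = (minLasts γ c).countP (t < ·)
  | [], _ => by simp [minFilling, minLasts]
  | g :: γ, c => by
    rw [minFilling_cons, flatten_cons, countP_append, countP_flatten_minFilling ht γ, minLasts,
      countP_cons, countP_append, countP_replicate]
    simp [Nat.not_lt_of_le ht, add_comm]

lemma countP_minLasts_le_countP_flatten (t : ℕ) :
    ∀ {γ : List ℕ} {T : List (List ℕ)} {c : ℕ}, IsRibbonSSYT γ T → IsComposition γ →
      (∀ r ∈ T.head?, c ≤ r.getLastD 0) →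
      (minLasts γ c).countP (t < ·) ≤ T.flatten.countP (t < ·)
  | [], _, _, _, _, _ => by simp [minLasts]
  | _ :: _, [], _, hT, _, _ => absurd hT.1.1 (by simp)
  | g :: _, [] :: _, _, hT, hγ, _ => absurd (isRibbonSSYT_cons.1 hT).1 (hγ g mem_cons_self).ne
  | g :: γ, (a :: r) :: T, c, hT, hγ, hc => by
    obtain ⟨hr, ⟨-, hpos⟩, hT', hlink⟩ := isRibbonSSYT_cons.1 hT
    have hlast : c ≤ (a :: r).getLastD 0 := hc _ rfl
    have hnext : ∀ r' ∈ T.head?, (if g = 1 then c + 1 else 2) ≤ r'.getLastD 0 := by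
      intro r' hr'
      have hlt : a < r'.getLastD 0 := hlink r' hr'
      split_ifs with hg
      · obtain rfl : r = [] := by simpa [hg] using hr
        simp only [getLastD_eq_getLast?, getLast?_singleton, Option.getD_some] at hlast
        omega
      · have := hpos a mem_cons_self
        omega
    have hfirst : (if t < c then 1 else 0) ≤ (a :: r).countP (t < ·) := by
      split_ifs with htc
      · exact countP_pos_iff.2 ⟨_, getLastD_mem_of_ne_nil (cons_ne_nil a r) 0,
          decide_eq_true (htc.trans_le hlast)⟩
      · exact Nat.zero_le _
    have hrest := countP_minLasts_le_countP_flatten t hT'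
      (fun x hx => hγ x (mem_cons_of_mem _ hx)) hnext
    rw [minLasts, countP_cons, flatten_cons, countP_append]
    simp only [decide_eq_true_eq] at hfirst ⊢
    omega

theorem countP_minLasts_le_of_schurPos_sub {α β : List ℕ} (hα : IsComposition α)
    (hβ : IsComposition β) (hpos : SchurPos (ribbon α - ribbon β)) {t : ℕ} (ht : 0 < t) :
    (minLasts α 1).countP (t < ·) ≤ (minLasts β 1).countP (t < ·) := by
  obtain ⟨T, hT, hcont⟩ :=
    exists_ribbonSSYT_of_schurPos_sub hpos (isRibbonSSYT_minFilling hβ one_pos)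
  have hfirst : ∀ r ∈ T.head?, 1 ≤ r.getLastD 0 := by
    intro r hr
    have hrT : r ∈ T := mem_of_mem_head? hr
    have hrne : r ≠ [] := by
      rintro rfl
      have : ([] : List ℕ).length ∈ α := rowsMatch_iff_map_length.1 hT.1 ▸ mem_map_of_mem hrT
      exact absurd (hα _ this) (lt_irrefl 0)
    exact (hT.2.1 r hrT).2 _ (getLastD_mem_of_ne_nil hrne 0)
  calc (minLasts α 1).countP (t < ·)
      ≤ T.flatten.countP (t < ·) := countP_minLasts_le_countP_flatten t hT hα hfirst
    _ = (minFilling β 1).flatten.countP (t < ·) :=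
        Perm.countP_eq _ (perm_iff_count.2 (congrFun hcont))
    _ = (minLasts β 1).countP (t < ·) := countP_flatten_minFilling ht β 1

lemma minLasts_replicate_append (p : ℕ) (w : List ℕ) (c : ℕ) :
    minLasts (replicate p 1 ++ w) c = range' c p ++ minLasts w (c + p) := by
  induction p generalizing c with
  | zero => simp
  | succ p ih =>
    simp [replicate_succ, minLasts, ih, range'_succ, Nat.add_right_comm c 1 p, Nat.add_assoc]

lemma minLasts_replicate (p c : ℕ) : minLasts (replicate p 1) c = range' c p := by
  simpa [minLasts] using minLasts_replicate_append p [] c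

lemma minLasts_cons_of_ne_one {z : ℕ} (hz : z ≠ 1) (w : List ℕ) (c : ℕ) :
    minLasts (z :: w) c = c :: minLasts w 2 := by
  simp [minLasts, hz]

lemma oneRuns_ne_nil : ∀ γ : List ℕ, oneRuns γ ≠ []
  | [] => by simp [oneRuns]
  | x :: γ => by
    unfold oneRuns
    split_ifs
    · split <;> simp
    · simp

lemma oneRuns_replicate (p : ℕ) : oneRuns (replicate p 1) = [p] := by
  induction p with
  | zero => rfl
  | succ p ih => simp [replicate_succ, oneRuns, ih]

lemma oneRuns_replicate_append_cons (p : ℕ) {z : ℕ} (hz : z ≠ 1) (γ : List ℕ) :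
    oneRuns (replicate p 1 ++ z :: γ) = p :: oneRuns γ := by
  induction p with
  | zero => simp [oneRuns, hz]
  | succ p ih => simp [replicate_succ, oneRuns, ih]

/-- For `γ` following a part `≥ 2`, `p'Tail γ` is the tail `p_2 ⋯ p_{m-1} (p_m - 1)` of `p'`. -/
def p'Tail (γ : List ℕ) : List ℤ :=
  let l : List ℤ := (oneRuns γ).map fun n => (n : ℤ)
  l.dropLast ++ [l.getLastD 0 - 1]

lemma p'Tail_replicate (q : ℕ) : p'Tail (replicate q 1) = [(q : ℤ) - 1] := by
  simp [p'Tail, oneRuns_replicate]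

lemma p'Tail_replicate_append_cons (q : ℕ) {z : ℕ} (hz : z ≠ 1) (γ : List ℕ) :
    p'Tail (replicate q 1 ++ z :: γ) = (q : ℤ) :: p'Tail γ := by
  obtain ⟨a, l, hl⟩ := exists_cons_of_ne_nil (oneRuns_ne_nil γ)
  simp [p'Tail, oneRuns_replicate_append_cons q hz, hl,
    dropLast_cons_of_ne_nil (cons_ne_nil _ _)]

lemma p'List_replicate_append_cons (p : ℕ) {z : ℕ} (hz : z ≠ 1) (γ : List ℕ) :
    p'List (replicate p 1 ++ z :: γ) = ((p : ℤ) - 1) :: p'Tail γ := by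
  obtain ⟨a, l, hl⟩ := exists_cons_of_ne_nil (oneRuns_ne_nil γ)
  simp [p'List, p'Tail, oneRuns_replicate_append_cons p hz, hl]

lemma length_p'Tail (γ : List ℕ) : (p'Tail γ).length = γ.countP (· ≠ 1) + 1 := by
  induction γ using replicate_append_induction with
  | ones q => simp [p'Tail_replicate, countP_replicate]
  | step q z γ hz ih => simp [p'Tail_replicate_append_cons q hz, countP_replicate, hz, ih]

lemma sum_p'Tail (γ : List ℕ) : (p'Tail γ).sum = γ.count 1 - 1 := by
  induction γ using replicate_append_induction with
  | ones q => simp [p'Tail_replicate]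
  | step q z γ hz ih =>
    simp only [p'Tail_replicate_append_cons q hz, sum_cons, ih, count_append, count_replicate_self,
      count_cons_of_ne hz, Nat.cast_add]
    ring

lemma neg_one_le_of_mem_p'Tail (γ : List ℕ) : ∀ x ∈ p'Tail γ, -1 ≤ x := by
  induction γ using replicate_append_induction with
  | ones q =>
    intro x hx
    simp only [p'Tail_replicate, mem_singleton] at hx
    omega
  | step q z γ hz ih =>
    simp only [p'Tail_replicate_append_cons q hz, forall_mem_cons]
    exact ⟨by omega, ih⟩

lemma count_neg_one_p'Tail (γ : List ℕ) {z : ℕ} (hz : z ≠ 1) :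
    (p'Tail γ).count (-1) = if γ.getLastD z = 1 then 0 else 1 := by
  induction γ using replicate_append_induction generalizing z with
  | ones q =>
    rw [p'Tail_replicate]
    rcases q with _ | q
    · simp [hz]
    · simp [replicate_succ', getLastD_eq_getLast?]
  | step q z' γ hz' ih =>
    have hq : (q : ℤ) ≠ -1 := by omega
    rw [p'Tail_replicate_append_cons q hz', count_cons, ih hz', getLastD_append_cons]
    simp [hq]

lemma countP_minLasts_two_eq_excess (s : ℕ) (γ : List ℕ) :
    (minLasts γ 2).countP (s + 2 < ·) = excess (p'Tail γ) s := by
  induction γ using replicate_append_induction with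
  | ones q =>
    rw [minLasts_replicate, countP_range'_lt, p'Tail_replicate]
    simp only [excess, map_cons, map_nil, sum_cons, sum_nil]
    omega
  | step q z γ hz ih =>
    rw [minLasts_replicate_append, minLasts_cons_of_ne_one hz, p'Tail_replicate_append_cons q hz,
      countP_append, countP_cons, countP_range'_lt, ih]
    simp only [excess, map_cons, sum_cons, decide_eq_true_eq]
    split_ifs <;> omega

lemma length_p'List {γ : List ℕ} (hγ : ∃ z ∈ γ, z ≠ 1) :
    (p'List γ).length = γ.countP (· ≠ 1) + 1 := by
  obtain ⟨p, z, γ, hz, rfl⟩ := exists_eq_replicate_append_cons hγ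
  simp [p'List_replicate_append_cons p hz, length_p'Tail, countP_replicate, hz]

lemma sum_p'List {γ : List ℕ} (hγ : ∃ z ∈ γ, z ≠ 1) :
    (p'List γ).sum = γ.count 1 - 2 := by
  obtain ⟨p, z, γ, hz, rfl⟩ := exists_eq_replicate_append_cons hγ
  simp only [p'List_replicate_append_cons p hz, sum_cons, sum_p'Tail, count_append,
    count_replicate_self, count_cons_of_ne hz, Nat.cast_add]
  ring

lemma neg_one_le_of_mem_p'List {γ : List ℕ} (hγ : ∃ z ∈ γ, z ≠ 1) :
    ∀ x ∈ p'List γ, -1 ≤ x := by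
  obtain ⟨p, z, γ, hz, rfl⟩ := exists_eq_replicate_append_cons hγ
  rw [p'List_replicate_append_cons p hz]
  exact forall_mem_cons.2 ⟨by omega, neg_one_le_of_mem_p'Tail γ⟩

lemma count_neg_one_p'List_add_deltaEnds {γ : List ℕ} (hγ : ∃ z ∈ γ, z ≠ 1) :
    (p'List γ).count (-1) + deltaEnds γ = 2 := by
  obtain ⟨p, z, γ, hz, rfl⟩ := exists_eq_replicate_append_cons hγ
  rw [p'List_replicate_append_cons p hz, count_cons, count_neg_one_p'Tail γ hz, deltaEnds,
    getLastD_append_cons]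
  have hp : (p : ℤ) - 1 = -1 ↔ p = 0 := by omega
  have hhead : (replicate p 1 ++ z :: γ).headI = 1 ↔ p ≠ 0 := by
    rcases p with _ | p <;> simp [hz, replicate_succ]
  simp only [beq_iff_eq, hp, hhead]
  split_ifs <;> omega

lemma countP_minLasts_one_eq_excess {γ : List ℕ} (hγ : ∃ z ∈ γ, z ≠ 1) (s : ℕ) :
    (minLasts γ 1).countP (s + 2 < ·) = excess (p'List γ) s := by
  obtain ⟨p, z, γ, hz, rfl⟩ := exists_eq_replicate_append_cons hγ
  rw [minLasts_replicate_append, minLasts_cons_of_ne_one hz, p'List_replicate_append_cons p hz,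
    countP_append, countP_cons, countP_range'_lt, countP_minLasts_two_eq_excess]
  simp only [excess, map_cons, sum_cons, decide_eq_true_eq]
  split_ifs <;> omega

/-- Proposition 2.11: if `λ(α) = λ(β)` and `r_α ≥_s r_β`, then `δ_α ≥ δ_β`, and
if `δ_α = δ_β` then `q'(α) ≤_lex q'(β)`. -/
theorem schur_positive_delta_and_q'
    (α β : List ℕ)
    (hα : IsComposition α) (hβ : IsComposition β)
    (hα1 : α ≠ List.replicate α.length 1)
    (hlam : (↑α : Multiset ℕ) = (↑β : Multiset ℕ))
    (hpos : SchurPos (ribbon α - ribbon β)) :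
    deltaEnds β ≤ deltaEnds α ∧
      (deltaEnds α = deltaEnds β → LexLE (q'Seq α) (q'Seq β)) := by
  have hperm : α ~ β := Multiset.coe_eq_coe.1 hlam
  have hα' : ∃ z ∈ α, z ≠ 1 := by
    by_contra! h
    exact hα1 (eq_replicate_of_mem h)
  have hβ' : ∃ z ∈ β, z ≠ 1 := hα'.imp fun z hz => ⟨hperm.subset hz.1, hz.2⟩
  have hdeficit (s : ℕ) : deficit (p'List α) s ≤ deficit (p'List β) s := by
    refine deficit_le_of_excess_le (by rw [length_p'List hα', length_p'List hβ', hperm.countP_eq])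
      (by rw [sum_p'List hα', sum_p'List hβ', hperm.count_eq]) ?_
    rw [← countP_minLasts_one_eq_excess hα', ← countP_minLasts_one_eq_excess hβ']
    exact countP_minLasts_le_of_schurPos_sub hα hβ hpos (by omega)
  obtain ⟨hneg, hlex⟩ := count_neg_one_le_and_lexLE (neg_one_le_of_mem_p'List hα')
    (neg_one_le_of_mem_p'List hβ') hdeficit
  have hδα := count_neg_one_p'List_add_deltaEnds hα'
  have hδβ := count_neg_one_p'List_add_deltaEnds hβ'
  exact ⟨by omega, fun hδ => hlex (by omega)⟩

end RibbonNearEq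
end

section
/- Let α and β be compositions of equal size N and equal length R, both different from 1^R, with λ(α) = λ(β), δ_α = δ_β, α_1 ≤ α_R, and β_1 ≤ β_R. If α_1 < β_1, then |E_{α,ε_0(α)}| = |E_{β,ε_0(α)}| + 1 + χ(α_1 = α_R). -/
namespace RibbonNearEq

/-- `ε(α) = (z_1 - 2 + χ(p_1 = 0)) (z_2 - 2) ⋯ (z_{R-k-1} - 2)
(z_{R-k} - 2 + χ(p_{R-k+1} = 0))`, where `z_1, …, z_{R-k}` are the parts of `α`
that are at least `2`; `p_1 = 0` iff `α` starts with a part `≠ 1`, and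
`p_{R-k+1} = 0` iff `α` ends with a part `≠ 1`. -/
def epsList (α : List ℕ) : List ℕ :=
  let e := (α.filter fun x => decide (x ≠ 1)).map fun z => z - 2
  let e1 := if α.headI ≠ 1 then e.set 0 (e.getD 0 0 + 1) else e
  if α.getLastD 0 ≠ 1 then e1.set (e1.length - 1) (e1.getD (e1.length - 1) 0 + 1) else e1

/-- `E_{α,M}`: lattice points `(x_1, …, x_{R-k-1})` with `Σ x_i = M` and
`0 ≤ x_i ≤ ε_i(α)` for `1 ≤ i ≤ R-k-1`. -/
def Eset (α : List ℕ) (M : ℕ) : Set (List ℤ) :=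
  {x | x.length = (epsList α).length - 1 ∧ x.sum = (M : ℤ) ∧
       ∀ i < x.length, 0 ≤ x.getD i 0 ∧ x.getD i 0 ≤ ((epsList α).getD (i + 1) 0 : ℤ)}

end RibbonNearEq

/-!
Write `α = a ⋯ b` and `β = c ⋯ d`. The hypotheses force `2 ≤ a ≤ b` and `a < c ≤ d`, so
`ε(α) = (a - 1, ε'_α, b - 1)` and `M := ε_0(α) = a - 1`, where `ε'_α` lists the interior parts
`≠ 1` of `α` minus `2`; similarly for `β`. The number of lattice points of a box with coordinate
sum `M` is a coefficient of `∏ (1 + X + ⋯ + X^cap)`, so it depends only on the multiset of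
capacities, and capacities may be truncated at `M`. Hence `|E_{α,M}|` and `|E_{β,M}|` count the
points of the boxes `ε'_α × [0, M]` and `ε'_β × [0, M]`. Since `λ(α) = λ(β)`, after truncation at
`M` the multisets `{a - 2, b - 2} ∪ ε'_α` and `{c - 2, d - 2} ∪ ε'_β` agree, with `a - 2 = M - 1`
and `c - 2, d - 2` truncated to `M`. Raising one capacity from `M - 1` to `M` adds exactly one
point (that coordinate `M`, all others `0`); this happens once, and a second time when `b = a`.
-/

namespace List

theorem getD_tail {α : Type*} (l : List α) (i : ℕ) (d : α) :
    l.tail.getD i d = l.getD (i + 1) d := by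
  cases l <;> simp

theorem forall₂_iff_getD {α β : Type*} {R : α → β → Prop} {l₁ : List α} {l₂ : List β}
    (d₁ : α) (d₂ : β) :
    Forall₂ R l₁ l₂ ↔ l₁.length = l₂.length ∧ ∀ i < l₁.length, R (l₁.getD i d₁) (l₂.getD i d₂) := by
  rw [forall₂_iff_get]
  refine and_congr_right fun hlen => ⟨fun h i hi => ?_, fun h i h₁ h₂ => ?_⟩
  · simpa [getD_eq_getElem, hi, hlen ▸ hi] using h i hi (hlen ▸ hi)
  · simpa [getD_eq_getElem, h₁, h₂] using h i h₁

theorem getLastD_cons_append_singleton {α : Type*} (a b d : α) (mid : List α) :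
    (a :: (mid ++ [b])).getLastD d = b := by
  rw [← cons_append, getLastD_concat]

theorem exists_eq_cons_append_singleton_of_perm {α : Type*} [Inhabited α] {l l' : List α}
    (h : l.Perm l') (hne : l.headI ≠ l'.headI) : ∃ a mid b, l = a :: (mid ++ [b]) := by
  match l, h with
  | [], h => simp_all
  | [a], h => simp_all [singleton_perm]
  | a :: y :: rest, _ =>
    obtain ⟨mid, b, hmid⟩ := (eq_nil_or_concat' (y :: rest)).resolve_left (by simp)
    exact ⟨a, mid, b, by rw [hmid]⟩

end List

namespace RibbonNearEq

open Polynomial Finset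

/-- The number of lattice points `x` with `0 ≤ x_i ≤ c_i` for the capacities `c_i ∈ V` and
`Σ x_i = M`. -/
noncomputable def boxCount (V : Multiset ℕ) (M : ℕ) : ℕ :=
  ((V.map fun c => ∑ i ∈ range (c + 1), (X : ℕ[X]) ^ i).prod).coeff M

theorem coeff_sum_range_X_pow (c k : ℕ) :
    (∑ i ∈ range (c + 1), (X : ℕ[X]) ^ i).coeff k = if k ≤ c then 1 else 0 := by
  simp [coeff_X_pow]

theorem boxCount_cons (c : ℕ) (V : Multiset ℕ) (M : ℕ) :
    boxCount (c ::ₘ V) M = ∑ j ∈ range (min c M + 1), boxCount V (M - j) := by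
  rw [boxCount, Multiset.map_cons, Multiset.prod_cons, coeff_mul,
    Nat.sum_antidiagonal_eq_sum_range_succ_mk]
  simp only [coeff_sum_range_X_pow, ite_mul, one_mul, zero_mul, ← sum_filter]
  congr 1
  ext j
  simp only [mem_filter, mem_range]
  omega

theorem boxCount_zero_right (V : Multiset ℕ) : boxCount V 0 = 1 := by
  induction V using Multiset.induction with
  | empty => simp [boxCount]
  | cons c V ih => simp [boxCount_cons, ih]

theorem boxCount_cons_of_le {M c : ℕ} (h : M ≤ c) (V : Multiset ℕ) :
    boxCount (c ::ₘ V) M = boxCount (M ::ₘ V) M := by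
  rw [boxCount_cons, boxCount_cons, min_eq_right h, min_self]

theorem boxCount_map_min {M N : ℕ} (h : M ≤ N) (V : Multiset ℕ) :
    boxCount (V.map (min · N)) M = boxCount V M := by
  induction V using Multiset.induction generalizing M with
  | empty => rfl
  | cons c V ih =>
    rw [Multiset.map_cons, boxCount_cons, boxCount_cons, min_assoc, min_eq_right h]
    exact sum_congr rfl fun j _ => ih (by omega)

theorem boxCount_self_cons_self {M : ℕ} (hM : 1 ≤ M) (V : Multiset ℕ) :
    boxCount (M ::ₘ M ::ₘ V) M = boxCount (M ::ₘ (M - 1) ::ₘ V) M + 1 := by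
  rw [Multiset.cons_swap M (M - 1), boxCount_cons, boxCount_cons, min_self,
    min_eq_left (Nat.sub_le M 1), Nat.sub_add_cancel hM, sum_range_succ, Nat.sub_self,
    boxCount_zero_right]

theorem boxCount_self_cons_of_replicate_add_eq {M : ℕ} (hM : 1 ≤ M) (k : ℕ)
    {V W : Multiset ℕ} (h : Multiset.replicate k (M - 1) + V = Multiset.replicate k M + W) :
    boxCount (M ::ₘ V) M = boxCount (M ::ₘ W) M + k := by
  induction k generalizing V with
  | zero => simp_all
  | succ k ih =>
    have hmem : M ∈ V := by
      have : M ∈ Multiset.replicate (k + 1) M + W := by simp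
      rw [← h, Multiset.mem_add, Multiset.mem_replicate] at this
      exact this.resolve_left (by omega)
    obtain ⟨V', rfl⟩ := Multiset.exists_cons_of_mem hmem
    have h' : Multiset.replicate k (M - 1) + (M - 1) ::ₘ V' = Multiset.replicate k M + W := by
      rw [Multiset.replicate_succ, Multiset.replicate_succ] at h
      simpa [Multiset.add_cons, Multiset.cons_add, Multiset.cons_swap (M - 1) M] using h
    rw [boxCount_self_cons_self hM, ih h']
    ring

theorem boxCount_self_cons_of_ends {M b c d : ℕ} (hM : 1 ≤ M) (hb : M - 1 ≤ b) (hc : M ≤ c)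
    (hd : M ≤ d) {V W : Multiset ℕ} (h : (M - 1) ::ₘ b ::ₘ V = c ::ₘ d ::ₘ W) :
    boxCount (M ::ₘ V) M = boxCount (M ::ₘ W) M + 1 + if b = M - 1 then 1 else 0 := by
  have htrunc (U : Multiset ℕ) : boxCount (M ::ₘ U) M = boxCount (M ::ₘ U.map (min · M)) M := by
    rw [← boxCount_map_min le_rfl, Multiset.map_cons, min_self]
  have h' := congrArg (Multiset.map (min · M)) h
  simp only [Multiset.map_cons, min_eq_left (Nat.sub_le M 1), min_eq_right hc,
    min_eq_right hd] at h'
  rw [htrunc V, htrunc W]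
  split_ifs with hbM
  · rw [hbM, min_eq_left (Nat.sub_le M 1)] at h'
    exact boxCount_self_cons_of_replicate_add_eq hM 2 (by simpa using h')
  · rw [min_eq_right (by omega), Multiset.cons_swap] at h'
    exact boxCount_self_cons_of_replicate_add_eq hM 1 (by simpa using h')

def boxFinset : List ℕ → ℕ → Finset (List ℤ)
  | [], M => if M = 0 then {[]} else ∅
  | c :: caps, M => (range (min c M + 1)).biUnion fun j =>
      (boxFinset caps (M - j)).image ((j : ℤ) :: ·)

theorem sum_nonneg_of_forall₂ {x : List ℤ} {caps : List ℕ}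
    (h : List.Forall₂ (fun (y : ℤ) (c : ℕ) => 0 ≤ y ∧ y ≤ c) x caps) : 0 ≤ x.sum := by
  induction h with
  | nil => rfl
  | cons hy _ ih => rw [List.sum_cons]; linarith [hy.1]

theorem mem_boxFinset {caps : List ℕ} {M : ℕ} {x : List ℤ} :
    x ∈ boxFinset caps M ↔
      List.Forall₂ (fun (y : ℤ) (c : ℕ) => 0 ≤ y ∧ y ≤ c) x caps ∧ x.sum = M := by
  induction caps generalizing M x with
  | nil => cases x <;> by_cases hM : M = 0 <;> simp [boxFinset, hM, eq_comm]
  | cons c caps ih =>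
    cases x with
    | nil => simp [boxFinset]
    | cons y x =>
      simp only [boxFinset, mem_biUnion, mem_range, mem_image, List.cons.injEq, ih,
        List.forall₂_cons, List.sum_cons]
      constructor
      · rintro ⟨j, hj, x, ⟨hx, hsum⟩, rfl, rfl⟩
        exact ⟨⟨⟨by omega, by omega⟩, hx⟩, by omega⟩
      · rintro ⟨⟨⟨hy0, hyc⟩, hx⟩, hsum⟩
        have := sum_nonneg_of_forall₂ hx
        exact ⟨y.toNat, by omega, x, ⟨hx, by omega⟩, by omega, rfl⟩

theorem card_boxFinset (caps : List ℕ) (M : ℕ) : #(boxFinset caps M) = boxCount caps M := by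
  induction caps generalizing M with
  | nil => by_cases hM : M = 0 <;> simp [boxFinset, boxCount, coeff_one, hM]
  | cons c caps ih =>
    rw [← Multiset.cons_coe, boxCount_cons, boxFinset, card_biUnion]
    · exact sum_congr rfl fun j _ => by rw [card_image_of_injective _ List.cons_injective, ih]
    · intro i _ j _ hij
      simp only [Function.onFun, disjoint_left, mem_image]
      rintro _ ⟨x, -, rfl⟩ ⟨y, -, hyx⟩
      exact hij (by exact_mod_cast (List.cons.inj hyx).1.symm)

theorem ncard_Eset (γ : List ℕ) (M : ℕ) : (Eset γ M).ncard = boxCount (epsList γ).tail M := by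
  have : Eset γ M = ↑(boxFinset (epsList γ).tail M) := by
    ext x
    simp only [Eset, Set.mem_ofPred_eq, mem_coe, mem_boxFinset,
      List.forall₂_iff_getD (0 : ℤ) (0 : ℕ), List.length_tail, List.getD_tail]
    tauto
  rw [this, Set.ncard_coe_finset, card_boxFinset]

def bigPartsSubTwo (l : List ℕ) : List ℕ := (l.filter fun x => decide (x ≠ 1)).map fun z => z - 2

theorem coe_bigPartsSubTwo_cons_append_singleton {a b : ℕ} (ha : a ≠ 1) (hb : b ≠ 1)
    (mid : List ℕ) :
    (bigPartsSubTwo (a :: (mid ++ [b])) : Multiset ℕ) =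
      (a - 2) ::ₘ (b - 2) ::ₘ bigPartsSubTwo mid := by
  simp [bigPartsSubTwo, ha, hb]

theorem epsList_cons_append_singleton {a b : ℕ} (ha : 2 ≤ a) (hb : 2 ≤ b) (mid : List ℕ) :
    epsList (a :: (mid ++ [b])) = (a - 1) :: (bigPartsSubTwo mid ++ [b - 1]) := by
  simp only [epsList, List.getLastD_cons_append_singleton]
  simp [bigPartsSubTwo, show a ≠ 1 by omega, show b ≠ 1 by omega,
    show a - 2 + 1 = a - 1 by omega, show b - 2 + 1 = b - 1 by omega]

theorem ncard_Eset_cons_append_singleton {a b M : ℕ} (ha : 2 ≤ a) (hb : 2 ≤ b) (hM : M ≤ b - 1)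
    (mid : List ℕ) :
    (Eset (a :: (mid ++ [b])) M).ncard = boxCount (M ::ₘ bigPartsSubTwo mid) M := by
  rw [ncard_Eset, epsList_cons_append_singleton ha hb, List.tail_cons,
    Multiset.coe_eq_coe.2 (List.perm_append_singleton _ _), ← Multiset.cons_coe,
    boxCount_cons_of_le hM]

theorem Eset_compare_first_ends_general
    (α β : List ℕ)
    (hα : IsComposition α)
    (hlam : (↑α : Multiset ℕ) = (↑β : Multiset ℕ))
    (hdelta : deltaEnds α = deltaEnds β)
    (hαe : α.headI ≤ α.getLastD 0) (hβe : β.headI ≤ β.getLastD 0)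
    (h1 : α.headI < β.headI) :
    Set.ncard (Eset α ((epsList α).getD 0 0)) =
      Set.ncard (Eset β ((epsList α).getD 0 0)) + 1 +
        (if α.headI = α.getLastD 0 then 1 else 0) := by
  have hperm : α.Perm β := Multiset.coe_eq_coe.mp hlam
  obtain ⟨a, mid, b, rfl⟩ := List.exists_eq_cons_append_singleton_of_perm hperm h1.ne
  obtain ⟨c, mid', d, rfl⟩ := List.exists_eq_cons_append_singleton_of_perm hperm.symm h1.ne'
  simp only [deltaEnds, List.headI_cons, List.getLastD_cons_append_singleton] at *
  have ha1 : a ≠ 1 := by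
    rintro rfl
    simp [show c ≠ 1 by omega, show d ≠ 1 by omega] at hdelta
  have ha2 : 2 ≤ a := by
    have := hα a List.mem_cons_self
    omega
  have hparts : (a - 2) ::ₘ (b - 2) ::ₘ (bigPartsSubTwo mid : Multiset ℕ) =
      (c - 2) ::ₘ (d - 2) ::ₘ bigPartsSubTwo mid' := by
    rw [← coe_bigPartsSubTwo_cons_append_singleton ha1 (by omega),
      ← coe_bigPartsSubTwo_cons_append_singleton (by omega) (by omega)]
    exact Multiset.coe_eq_coe.2 ((hperm.filter _).map _)
  rw [epsList_cons_append_singleton ha2 (by omega), List.getD_cons_zero,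
    ncard_Eset_cons_append_singleton ha2 (by omega) (by omega),
    ncard_Eset_cons_append_singleton (by omega) (by omega) (by omega),
    boxCount_self_cons_of_ends (M := a - 1) (by omega) (by omega) (by omega) (by omega) hparts]
  simp only [show b - 2 = a - 1 - 1 ↔ a = b by omega]

/-- Lemma 3.18, part (1): if `α_1 < β_1` then
`|E_{α,ε_0(α)}| = |E_{β,ε_0(α)}| + 1 + χ(α_1 = α_R)`. -/
theorem Eset_compare_first_ends
    (α β : List ℕ)
    (hα : IsComposition α) (hβ : IsComposition β)
    (hα1 : α ≠ List.replicate α.length 1) (hβ1 : β ≠ List.replicate β.length 1)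
    (hsz : α.sum = β.sum) (hlen : α.length = β.length)
    (hlam : (↑α : Multiset ℕ) = (↑β : Multiset ℕ))
    (hdelta : deltaEnds α = deltaEnds β)
    (hαe : α.headI ≤ α.getLastD 0) (hβe : β.headI ≤ β.getLastD 0)
    (h1 : α.headI < β.headI) :
    Set.ncard (Eset α ((epsList α).getD 0 0)) =
      Set.ncard (Eset β ((epsList α).getD 0 0)) + 1 +
        (if α.headI = α.getLastD 0 then 1 else 0) :=
  Eset_compare_first_ends_general α β hα hlam hdelta hαe hβe h1

end RibbonNearEq
end

section
/- Let α and β be compositions of equal size N and equal length R, both different from 1^R, with λ(α) = λ(β), δ_α = δ_β, α_1 ≤ α_R, and β_1 ≤ β_R. If α_1 = β_1 and α_R < β_R, then |E_{α*,ε_0(α*)}| = |E_{β*,ε_0(α*)}| + 1, where γ* denotes the reverse of a composition γ. -/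
/-!
`|E_{γ,M}|` counts the lattice points of the box `∏ [0, ε_i(γ)]` (`i ≥ 1`) with coordinate sum `M`,
so it only depends on the multiset of bounds `ε_i(γ)`, `i ≥ 1`. Write `a = α_R < b = β_R` and
`c = α_1 = β_1`; the condition on `δ` forces `a ≥ 2`. Reversing puts the last part first, so
`ε_0(α*) = a - 1`, and the remaining bounds of `α*` are the `z - 2` over the parts `z ≠ 1` of `α`
other than `α_R`, with the one of `c` raised to `c - 1` when `c ≠ 1`. As `λ(α) = λ(β)`, the bounds
of `α*` and `β*` agree except that one bound `b - 2` of `α*` is `a - 2` in `β*`. For the sum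
`M = a - 1 ≤ b - 2` the bound `b - 2` never binds, while `a - 2` excludes exactly one point,
`(a - 1, 0, …, 0)`.
-/

namespace RibbonNearEq

def boxPoints : List ℕ → ℤ → Finset (List ℤ)
  | [], M => if M = 0 then {[]} else ∅
  | b :: c, M =>
    (Finset.range (b + 1)).biUnion fun j => (boxPoints c (M - j)).image (List.cons (j : ℤ))

theorem mem_boxPoints {c : List ℕ} {M : ℤ} {x : List ℤ} :
    x ∈ boxPoints c M ↔
      List.Forall₂ (fun (xi : ℤ) (ci : ℕ) => 0 ≤ xi ∧ xi ≤ ci) x c ∧ x.sum = M := by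
  induction c generalizing M x with
  | nil => by_cases hM : M = 0 <;> cases x <;> simp [boxPoints, hM, eq_comm]
  | cons b c ih =>
    cases x with
    | nil => simp [boxPoints]
    | cons x₀ x =>
      simp only [boxPoints, Finset.mem_biUnion, Finset.mem_range, Finset.mem_image, ih,
        List.forall₂_cons, List.sum_cons, List.cons.injEq]
      constructor
      · rintro ⟨j, hj, y, ⟨hy, hsum⟩, rfl, rfl⟩
        exact ⟨⟨⟨by positivity, by omega⟩, hy⟩, by omega⟩
      · rintro ⟨⟨⟨h0, hb⟩, hx⟩, rfl⟩
        exact ⟨x₀.toNat, by omega, x, ⟨hx, by omega⟩, by omega, rfl⟩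

theorem boxPoints_of_neg (c : List ℕ) {M : ℤ} (hM : M < 0) : boxPoints c M = ∅ := by
  induction c generalizing M with
  | nil => simp [boxPoints, hM.ne]
  | cons b c ih =>
    have hempty (j : ℕ) : boxPoints c (M - j) = ∅ := ih (by omega)
    simp [boxPoints, hempty, Finset.eq_empty_iff_forall_notMem]

theorem card_boxPoints_cons (b : ℕ) (c : List ℕ) (M : ℤ) :
    (boxPoints (b :: c) M).card = ∑ j ∈ Finset.range (b + 1), (boxPoints c (M - j)).card := by
  rw [boxPoints, Finset.card_biUnion]
  · simp_rw [Finset.card_image_of_injective _ List.cons_injective]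
  · intro j _ k _ hjk
    simp only [Function.onFun, Finset.disjoint_left, Finset.mem_image]
    rintro _ ⟨y, -, rfl⟩ ⟨z, -, hz⟩
    exact hjk (by exact_mod_cast (List.cons.inj hz).1.symm)

theorem card_boxPoints_zero (c : List ℕ) : (boxPoints c 0).card = 1 := by
  induction c with
  | nil => simp [boxPoints]
  | cons b c ih =>
    rw [card_boxPoints_cons, Finset.sum_eq_single 0 (fun j _ hj => by
      rw [boxPoints_of_neg c (by omega), Finset.card_empty]) (by simp)]
    simpa using ih

theorem card_boxPoints_perm {c c' : List ℕ} (h : c.Perm c') (M : ℤ) :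
    (boxPoints c M).card = (boxPoints c' M).card := by
  induction h generalizing M with
  | nil => rfl
  | cons b _ ih => simp only [card_boxPoints_cons, ih]
  | swap b b' c =>
    simp only [card_boxPoints_cons]
    rw [Finset.sum_comm]
    simp only [sub_right_comm]
  | trans _ _ ih₁ ih₂ => exact (ih₁ M).trans (ih₂ M)

theorem card_boxPoints_cons_of_lt {n b : ℕ} (h : n < b) (s : List ℕ) :
    (boxPoints (b :: s) (n + 1)).card = (boxPoints (n :: s) (n + 1)).card + 1 := by
  have hsub : Finset.range (n + 2) ⊆ Finset.range (b + 1) := Finset.range_subset_range.2 (by omega)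
  rw [card_boxPoints_cons, card_boxPoints_cons, ← Finset.sum_subset hsub, Finset.sum_range_succ]
  · simp [card_boxPoints_zero]
  · intro j _ hj
    rw [Finset.mem_range] at hj
    rw [boxPoints_of_neg s (by omega), Finset.card_empty]

theorem card_boxPoints_of_perm_cons {n b : ℕ} (h : n < b) {l l' : List ℕ}
    (hperm : (n :: l).Perm (b :: l')) (t : List ℕ) :
    (boxPoints (l ++ t) (n + 1)).card = (boxPoints (l' ++ t) (n + 1)).card + 1 := by
  have hcoe : n ::ₘ (l : Multiset ℕ) = b ::ₘ (l' : Multiset ℕ) := Multiset.coe_eq_coe.mpr hperm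
  obtain ⟨-, s, hl, hl'⟩ := (Multiset.cons_eq_cons.mp hcoe).resolve_left (by omega)
  obtain ⟨s, rfl⟩ := Quot.exists_rep s
  have hl : (l ++ t).Perm (b :: (s ++ t)) := (Multiset.coe_eq_coe.mp hl).append_right t
  have hl' : (l' ++ t).Perm (n :: (s ++ t)) := (Multiset.coe_eq_coe.mp hl').append_right t
  rw [card_boxPoints_perm hl, card_boxPoints_perm hl', card_boxPoints_cons_of_lt h]

theorem List.headI_eq_getLastD_of_length_le_one {l : List ℕ} (h : l.length ≤ 1) :
    l.headI = l.getLastD 0 := by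
  match l, h with
  | [], _ => rfl
  | [_], _ => rfl

theorem List.exists_eq_cons_append_singleton {α : Type*} {l : List α} (h : 2 ≤ l.length) :
    ∃ c v a, l = c :: v ++ [a] := by
  match l, h with
  | c :: l', h =>
    rcases l'.eq_nil_or_concat with rfl | ⟨v, a, rfl⟩
    · simp at h
    · exact ⟨c, v, a, by simp⟩

theorem Eset_eq_boxPoints (γ : List ℕ) (M : ℕ) : Eset γ M = boxPoints (epsList γ).tail M := by
  ext x
  simp only [Eset, Set.mem_ofPred_eq, Finset.mem_coe, mem_boxPoints, List.forall₂_iff_get,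
    List.length_tail, List.get_eq_getElem, List.getElem_tail]
  constructor
  · rintro ⟨hl, hs, hb⟩
    refine ⟨⟨hl, fun i h₁ h₂ => ?_⟩, hs⟩
    simpa [List.getD_eq_getElem, h₁, show i + 1 < (epsList γ).length by omega] using hb i h₁
  · rintro ⟨⟨hl, hb⟩, hs⟩
    refine ⟨hl, hs, fun i h₁ => ?_⟩
    simpa [List.getD_eq_getElem, h₁, show i + 1 < (epsList γ).length by omega]
      using hb i h₁ (by omega)

theorem epsList_cons_append_singleton_s13 {a c : ℕ} (ha : 2 ≤ a) (hc : c ≠ 0) (m : List ℕ) :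
    epsList (a :: (m ++ [c])) =
      (a - 1) :: ((m.filter fun x => decide (x ≠ 1)).map (· - 2) ++
        if c = 1 then [] else [c - 1]) := by
  have hlast : (a :: (m ++ [c])).getLastD 0 = c := by
    rw [← List.cons_append, List.getLastD_concat]
  simp only [epsList, hlast]
  by_cases hc1 : c = 1 <;> simp [List.filter_append, show a ≠ 1 by omega, hc1] <;> omega

theorem epsList_reverse_cons_append_singleton {a c : ℕ} (ha : 2 ≤ a) (hc : c ≠ 0) (v : List ℕ) :
    epsList (c :: v ++ [a]).reverse =
      (a - 1) :: ((v.reverse.filter fun x => decide (x ≠ 1)).map (· - 2) ++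
        if c = 1 then [] else [c - 1]) := by
  rw [show (c :: v ++ [a]).reverse = a :: (v.reverse ++ [c]) by simp,
    epsList_cons_append_singleton_s13 ha hc]

theorem perm_filter_map_reverse_of_perm {a b c : ℕ} (ha : a ≠ 1) (hb : b ≠ 1) {v u : List ℕ}
    (h : (c :: v ++ [a]).Perm (c :: u ++ [b])) :
    ((a - 2) :: (v.reverse.filter fun x => decide (x ≠ 1)).map (· - 2)).Perm
      ((b - 2) :: (u.reverse.filter fun x => decide (x ≠ 1)).map (· - 2)) := by
  have hrev : (a :: v.reverse).Perm (b :: u.reverse) := by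
    have := (List.perm_cons c).mp h
    simpa using (List.reverse_perm _).trans (this.trans (List.reverse_perm _).symm)
  have := (hrev.filter fun x => decide (x ≠ 1)).map (· - 2)
  rwa [List.filter_cons_of_pos (by simpa using ha), List.filter_cons_of_pos (by simpa using hb),
    List.map_cons, List.map_cons] at this

theorem Eset_compare_last_ends_general
    (α β : List ℕ)
    (hα : IsComposition α)
    (hlam : (↑α : Multiset ℕ) = (↑β : Multiset ℕ))
    (hdelta : deltaEnds α = deltaEnds β)
    (hαe : α.headI ≤ α.getLastD 0)
    (h1 : α.headI = β.headI) (h2 : α.getLastD 0 < β.getLastD 0) :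
    Set.ncard (Eset α.reverse ((epsList α.reverse).getD 0 0)) =
      Set.ncard (Eset β.reverse ((epsList α.reverse).getD 0 0)) + 1 := by
  have hperm := Multiset.coe_eq_coe.mp hlam
  have hlong : 2 ≤ α.length := by
    by_contra! hshort
    have hβshort : β.length ≤ 1 := hperm.length_eq ▸ Nat.le_of_lt_succ hshort
    rw [List.headI_eq_getLastD_of_length_le_one (Nat.le_of_lt_succ hshort),
      List.headI_eq_getLastD_of_length_le_one hβshort] at h1
    omega
  obtain ⟨c, v, a, rfl⟩ := List.exists_eq_cons_append_singleton hlong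
  obtain ⟨c', u, b, rfl⟩ := List.exists_eq_cons_append_singleton (hperm.length_eq ▸ hlong)
  simp only [deltaEnds, List.getLastD_concat] at h2 hαe hdelta
  simp only [List.cons_append, List.headI_cons] at h1 hαe hdelta
  subst h1
  have hc : c ≠ 0 := (hα c (by simp)).ne'
  have ha : 2 ≤ a := by
    by_contra! ha
    obtain rfl : a = 1 := by omega
    obtain rfl : c = 1 := by omega
    simp [show b ≠ 1 by omega] at hdelta
  rw [Eset_eq_boxPoints, Eset_eq_boxPoints, Set.ncard_coe_finset, Set.ncard_coe_finset,
    epsList_reverse_cons_append_singleton ha hc,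
    epsList_reverse_cons_append_singleton (by omega) hc]
  simp only [List.getD_cons_zero, List.tail_cons]
  rw [show a - 1 = a - 2 + 1 by omega, Nat.cast_add_one]
  exact card_boxPoints_of_perm_cons (by omega)
    (perm_filter_map_reverse_of_perm (by omega) (by omega) hperm) _

/-- Lemma 3.18, part (2): if `α_1 = β_1` and `α_R < β_R` then
`|E_{α*,ε_0(α*)}| = |E_{β*,ε_0(α*)}| + 1`. -/
theorem Eset_compare_last_ends
    (α β : List ℕ)
    (hα : IsComposition α) (hβ : IsComposition β)
    (hα1 : α ≠ List.replicate α.length 1) (hβ1 : β ≠ List.replicate β.length 1)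
    (hsz : α.sum = β.sum) (hlen : α.length = β.length)
    (hlam : (↑α : Multiset ℕ) = (↑β : Multiset ℕ))
    (hdelta : deltaEnds α = deltaEnds β)
    (hαe : α.headI ≤ α.getLastD 0) (hβe : β.headI ≤ β.getLastD 0)
    (h1 : α.headI = β.headI) (h2 : α.getLastD 0 < β.getLastD 0) :
    Set.ncard (Eset α.reverse ((epsList α.reverse).getD 0 0)) =
      Set.ncard (Eset β.reverse ((epsList α.reverse).getD 0 0)) + 1 :=
  Eset_compare_last_ends_general α β hα hlam hdelta hαe h1 h2

end RibbonNearEq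
end

section
/- Let α and β be compositions of equal length R with λ(α) = λ(β). If e(α) ≠ e(β), then ap(α) ≠ ap(β), where e(γ) = {γ_1, γ_R} is the multiset of end parts and ap(γ) = {{γ_1,γ_2},{γ_2,γ_3},…,{γ_{R−1},γ_R}} is the multiset of adjacent pairs (each pair taken as a multiset). -/
namespace RibbonNearEq

/-- The ends `e(γ)` of a composition: the multiset of its two end parts. -/
def ends (γ : List ℕ) : Multiset ℕ := {γ.headI, γ.getLastD 0}

/-- The adjacent pairs `ap(γ)`: the multiset of the multisets `{γ_i, γ_{i+1}}`. -/
def adjacentPairs (γ : List ℕ) : Multiset (Multiset ℕ) :=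
  (↑((γ.zip γ.tail).map fun p => ({p.1, p.2} : Multiset ℕ)) : Multiset (Multiset ℕ))

/- Every part of `γ` lies in two adjacent pairs, except that an end part is missing once
for each end it occupies; adding `e(γ)` back restores two copies of every part.
Hence `e(γ)` is determined by `λ(γ)` and `ap(γ)`, once `γ` is nonempty. -/
theorem sum_adjacentPairs_add_ends {γ : List ℕ} (hγ : γ ≠ []) :
    (adjacentPairs γ).sum + ends γ = γ + γ := by
  induction γ with
  | nil => contradiction
  | cons a t ih =>
    rcases t with _ | ⟨b, s⟩
    · rfl
    · have ih := ih (List.cons_ne_nil b s)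
      simp only [adjacentPairs, ends, List.zip_cons_cons, List.tail_cons, List.map_cons,
        ← Multiset.cons_coe, Multiset.sum_cons, List.headI_cons, List.getLastD_cons] at ih ⊢
      rw [show a ::ₘ b ::ₘ ↑s + a ::ₘ b ::ₘ ↑s = {a} + {a} + (b ::ₘ ↑s + b ::ₘ ↑s) by
        simp only [← Multiset.singleton_add]; abel, ← ih]
      simp only [Multiset.insert_eq_cons, ← Multiset.singleton_add]
      abel

theorem ends_differ_adjacent_pairs_differ_general
    (α β : List ℕ)
    (hlam : (↑α : Multiset ℕ) = (↑β : Multiset ℕ))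
    (he : ends α ≠ ends β) :
    adjacentPairs α ≠ adjacentPairs β := by
  intro hap
  have hα : α ≠ [] := by
    rintro rfl
    obtain rfl : β = [] := by simpa using hlam.symm
    exact he rfl
  have hβ : β ≠ [] := by
    simpa [← Multiset.coe_eq_zero, ← hlam] using hα
  refine he (add_left_cancel (a := (adjacentPairs α).sum) ?_)
  rw [sum_adjacentPairs_add_ends hα, hap, sum_adjacentPairs_add_ends hβ, hlam]

/-- Proposition 3.22: if `λ(α) = λ(β)` and `e(α) ≠ e(β)`, then
`ap(α) ≠ ap(β)`. -/
theorem ends_differ_adjacent_pairs_differ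
    (α β : List ℕ)
    (hα : IsComposition α) (hβ : IsComposition β)
    (hlen : α.length = β.length)
    (hlam : (↑α : Multiset ℕ) = (↑β : Multiset ℕ))
    (he : ends α ≠ ends β) :
    adjacentPairs α ≠ adjacentPairs β :=
  ends_differ_adjacent_pairs_differ_general α β hlam he

end RibbonNearEq
end
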